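/- Fix a cluster C_ℓ and a feasible fractional LP solution (x*, z*) with coverage requirement M_ℓ. Suppose each tag j ∈ T is independently assigned to at most one cluster, with tag j assigned to cluster ℓ' with probability x*_{ℓ'}(j)/2 (and to no cluster with the remaining probability); let X_ℓ be the random set of tags assigned to cluster ℓ, and let Z_ℓ be the number of objects s_i ∈ C_ℓ with t_i ∩ X_ℓ ≠ ∅. Then E[Z_ℓ] ≥ M_ℓ/4. -/

import Mathlib

open scoped BigOperators Classical

/-!
Let `q j = x ℓ j / 2` be the probability that tag `j` goes to cluster `ℓ`. By independence an
object `s_i ∈ C ℓ` is left uncovered with probability `∏_{j ∈ t_i} (1 - q j) ≤ 1 / (1 + ∑ q j)`,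
and the LP gives `∑_{j ∈ t_i} q j ≥ z_i / 2` with `z_i ≤ 1`, so `s_i` is covered with probability
at least `(z_i / 2) / (1 + z_i / 2) ≥ z_i / 4`. Summing over `C ℓ` and using `∑ z_i ≥ M ℓ` gives
the bound.
-/

namespace Finset

lemma prod_one_sub_mul_one_add_sum_le_one {ι : Type*} (s : Finset ι) {q : ι → ℝ}
    (hq0 : ∀ j ∈ s, 0 ≤ q j) (hq1 : ∀ j ∈ s, q j ≤ 1) :
    (∏ j ∈ s, (1 - q j)) * (1 + ∑ j ∈ s, q j) ≤ 1 := by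
  induction s using Finset.induction_on with
  | empty => simp
  | @insert a s ha ih =>
    rw [prod_insert ha, sum_insert ha]
    have hP : 0 ≤ ∏ j ∈ s, (1 - q j) :=
      prod_nonneg fun j hj => sub_nonneg.2 (hq1 j (mem_insert_of_mem hj))
    have hS : 0 ≤ ∑ j ∈ s, q j := sum_nonneg fun j hj => hq0 j (mem_insert_of_mem hj)
    have ih := ih (fun j hj => hq0 j (mem_insert_of_mem hj))
      (fun j hj => hq1 j (mem_insert_of_mem hj))
    have ha0 := hq0 a (mem_insert_self a s)
    have ha1 := hq1 a (mem_insert_self a s)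
    nlinarith [mul_nonneg (mul_nonneg hP ha0) hS, mul_nonneg hP (mul_nonneg ha0 ha0)]

lemma div_four_le_one_sub_prod_one_sub {ι : Type*} (s : Finset ι) {q : ι → ℝ} {c : ℝ}
    (hq0 : ∀ j ∈ s, 0 ≤ q j) (hq1 : ∀ j ∈ s, q j ≤ 1) (hc0 : 0 ≤ c) (hc1 : c ≤ 1)
    (hsum : c / 2 ≤ ∑ j ∈ s, q j) :
    c / 4 ≤ 1 - ∏ j ∈ s, (1 - q j) := by
  have hprod := s.prod_one_sub_mul_one_add_sum_le_one hq0 hq1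
  have hP : 0 ≤ ∏ j ∈ s, (1 - q j) := prod_nonneg fun j hj => sub_nonneg.2 (hq1 j hj)
  nlinarith [mul_nonneg hP (sub_nonneg.2 hsum), mul_nonneg hc0 (sub_nonneg.2 hc1)]

end Finset

lemma sum_prod_mul_ite_exists_eq {ι α : Type*} [Fintype ι] [DecidableEq ι] [Fintype α]
    [DecidableEq α] {w : ι → α → ℝ} (hw : ∀ j, ∑ o, w j o = 1) (s : Finset ι) (c : α) :
    ∑ a : ι → α, (∏ j, w j (a j)) * (if ∃ j ∈ s, a j = c then 1 else 0)
      = 1 - ∏ j ∈ s, (1 - w j c) := by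
  have hmiss : ∀ a : ι → α, (∏ j, w j (a j)) * (if ∃ j ∈ s, a j = c then 1 else 0)
      = ∏ j, w j (a j) - ∏ j, (if j ∈ s ∧ a j = c then 0 else w j (a j)) := by
    intro a
    by_cases hhit : ∃ j ∈ s, a j = c
    · obtain ⟨j₀, hj₀, hj₀c⟩ := hhit
      have hzero : ∏ j, (if j ∈ s ∧ a j = c then 0 else w j (a j)) = 0 :=
        Finset.prod_eq_zero (Finset.mem_univ j₀) (if_pos ⟨hj₀, hj₀c⟩)
      rw [if_pos ⟨j₀, hj₀, hj₀c⟩, hzero]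
      ring
    · rw [if_neg hhit, Finset.prod_congr rfl fun j _ => if_neg fun h => hhit ⟨j, h⟩]
      ring
  have hmarginal : ∀ j, ∑ o, (if j ∈ s ∧ o = c then 0 else w j o)
      = if j ∈ s then 1 - w j c else 1 := by
    intro j
    by_cases hj : j ∈ s
    · simp only [hj, true_and, if_true]
      rw [Finset.sum_ite, Finset.sum_const_zero, zero_add, Finset.filter_ne',
        Finset.sum_erase_eq_sub (Finset.mem_univ c), hw j]
    · simp only [hj, false_and, if_false, hw j]
  rw [Finset.sum_congr rfl fun a _ => hmiss a, Finset.sum_sub_distrib, ← Fintype.prod_sum,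
    ← Fintype.prod_sum (fun j o => if j ∈ s ∧ o = c then 0 else w j o)]
  simp only [hw, hmarginal, Finset.prod_const_one, Finset.prod_ite_mem, Finset.univ_inter]

noncomputable def tagAssignmentProb {T : Type*} {k : ℕ} (x : Fin k → T → ℝ) (j : T) :
    Option (Fin k) → ℝ :=
  fun o => o.elim (1 - (∑ ℓ', x ℓ' j) / 2) (fun ℓ' => x ℓ' j / 2)

lemma sum_tagAssignmentProb {T : Type*} {k : ℕ} (x : Fin k → T → ℝ) (j : T) :
    ∑ o, tagAssignmentProb x j o = 1 := by
  simp only [Fintype.sum_option, tagAssignmentProb, Option.elim, ← Finset.sum_div]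
  ring

theorem stmt0 {S T : Type*} [Fintype T] [DecidableEq T]
    {k : ℕ} (C : Fin k → Finset S) (t : S → Finset T)
    (M : Fin k → ℝ) (x : Fin k → T → ℝ) (z : S → ℝ)
    (hx0 : ∀ ℓ j, 0 ≤ x ℓ j) (hx1 : ∀ ℓ j, x ℓ j ≤ 1)
    (hz0 : ∀ i, 0 ≤ z i) (hz1 : ∀ i, z i ≤ 1)
    (hcov : ∀ ℓ, ∀ i ∈ C ℓ, z i ≤ ∑ j ∈ t i, x ℓ j)
    (hM : ∀ ℓ, M ℓ ≤ ∑ i ∈ C ℓ, z i)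
    (ℓ : Fin k)
    (prob : (T → Option (Fin k)) → ℝ)
    (hprob : ∀ a, prob a =
      ∏ j, (match a j with
        | some ℓ' => x ℓ' j / 2
        | none => 1 - (∑ ℓ', x ℓ' j) / 2)) :
    M ℓ / 4 ≤ ∑ a : T → Option (Fin k),
      prob a * (((C ℓ).filter fun i => ∃ j ∈ t i, a j = some ℓ).card : ℝ) := by
  have hprob' : ∀ a, prob a = ∏ j, tagAssignmentProb x j (a j) := fun a => by
    rw [hprob a]
    exact Finset.prod_congr rfl fun j _ => by cases a j <;> rfl
  have hcovered : ∀ i ∈ C ℓ,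
      z i / 4 ≤ ∑ a, prob a * if ∃ j ∈ t i, a j = some ℓ then 1 else 0 := by
    intro i hi
    simp only [hprob']
    rw [sum_prod_mul_ite_exists_eq (sum_tagAssignmentProb x) (t i) (some ℓ)]
    refine (t i).div_four_le_one_sub_prod_one_sub (q := fun j => x ℓ j / 2)
      (fun j _ => by linarith [hx0 ℓ j]) (fun j _ => by linarith [hx1 ℓ j]) (hz0 i) (hz1 i) ?_
    rw [← Finset.sum_div]
    linarith [hcov ℓ i hi]
  calc M ℓ / 4 ≤ ∑ i ∈ C ℓ, z i / 4 := by rw [← Finset.sum_div]; linarith [hM ℓ]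
    _ ≤ ∑ i ∈ C ℓ, ∑ a, prob a * if ∃ j ∈ t i, a j = some ℓ then 1 else 0 :=
      Finset.sum_le_sum hcovered
    _ = _ := by
      rw [Finset.sum_comm]
      simp only [← Finset.mul_sum, Finset.sum_boole]
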